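/- Cancellation lemma (Gaussian elimination): Let ι be a finite type, let V = ι →₀ 𝔽₂ be the free 𝔽₂-vector space with distinguished basis (x_i)_{i∈ι}, and let d : V → V be an 𝔽₂-linear map with d ∘ d = 0. For i, j ∈ ι write d(x_i, x_j) ∈ 𝔽₂ for the coefficient of x_j in d(x_i). Suppose k ≠ l in ι satisfy d(x_k, x_l) = 1. Let ι' = {i ∈ ι | i ≠ k and i ≠ l}, let V' be the free 𝔽₂-vector space on ι', and define d' : V' → V' on basis elements by d'(x_i) = Σ_{j ∈ ι'} (d(x_i, x_j) + d(x_i, x_l)·d(x_k, x_j)) x_j. Then d' ∘ d' = 0, and (V', d') is chain homotopy equivalent to (V, d): there exist 𝔽₂-linear maps f : V → V', g : V' → V and h : V → V with f ∘ d = d' ∘ f, g ∘ d' = d ∘ g, f ∘ g = id_{V'}, and g ∘ f + id_V = d ∘ h + h ∘ d. In particular the homology ker d' / im d' is isomorphic to ker d / im d. -/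

import Mathlib

/-!
Let `h` send `x l` to `x k` and the other basis vectors to `0`. Since `d(x_k, x_l) = 1` we have
`h ∘ d ∘ h = h` and `h ∘ h = 0`, so `p = 1 - (d h + h d)` is an idempotent chain map, homotopic
to the identity. It kills `x k`, and `p v` has no `x l`-coordinate, so `p` is split by the
projection `π` onto the remaining basis vectors and the inclusion `ι`: `f = π p` and `g = p ι`
satisfy `f g = 1` and `g f = p`. The differential `f d g` transported along this splitting is `d'`,
and a chain homotopy equivalence induces an isomorphism on homology.
-/

open LinearMap

theorem neg_eq_self_of_zmod_two {M : Type*} [AddCommGroup M] [Module (ZMod 2) M] (v : M) :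
    -v = v := by
  rw [← neg_one_smul (ZMod 2) v]
  exact one_smul _ v

namespace DifferentialModule

variable {R : Type*} [Ring R] {V V' V'' : Type*} [AddCommGroup V] [Module R V]
  [AddCommGroup V'] [Module R V'] [AddCommGroup V''] [Module R V'']
  {d : V →ₗ[R] V} {d' : V' →ₗ[R] V'} {d'' : V'' →ₗ[R] V''}

variable (d) in
abbrev Homology : Type _ :=
  ker d ⧸ (range d).comap (ker d).subtype

def homologyMap (f : V →ₗ[R] V') (hf : f ∘ₗ d = d' ∘ₗ f) : Homology d →ₗ[R] Homology d' :=
  have hf' (v : V) : d' (f v) = f (d v) := (LinearMap.congr_fun hf v).symm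
  Submodule.mapQ _ _
    (f.restrict fun v (hv : d v = 0) => show d' (f v) = 0 by rw [hf', hv, map_zero])
    (by
      rintro ⟨v, hv⟩ ⟨w, hw⟩
      exact ⟨f w, (hf' w).trans (congrArg f hw)⟩)

theorem homologyMap_comp (f : V →ₗ[R] V') (g : V' →ₗ[R] V'') (hf : f ∘ₗ d = d' ∘ₗ f)
    (hg : g ∘ₗ d' = d'' ∘ₗ g) :
    homologyMap g hg ∘ₗ homologyMap f hf =
      homologyMap (g ∘ₗ f) (by rw [comp_assoc, hf, ← comp_assoc, hg, comp_assoc]) := by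
  ext
  rfl

theorem homologyMap_eq_id_of_homotopy (φ : V →ₗ[R] V) (hφ : φ ∘ₗ d = d ∘ₗ φ)
    (h : V →ₗ[R] V) (hφh : φ = LinearMap.id - (d ∘ₗ h + h ∘ₗ d)) :
    homologyMap φ hφ = LinearMap.id := by
  ext ⟨v, hv : d v = 0⟩
  refine (Submodule.Quotient.eq _).2 ⟨-h v, ?_⟩
  simp [hφh, hv]

theorem nonempty_homology_linearEquiv_of_homotopyEquiv (f : V →ₗ[R] V') (g : V' →ₗ[R] V)
    (hf : f ∘ₗ d = d' ∘ₗ f) (hg : g ∘ₗ d' = d ∘ₗ g)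
    (h : V →ₗ[R] V) (hgf : g ∘ₗ f = LinearMap.id - (d ∘ₗ h + h ∘ₗ d))
    (h' : V' →ₗ[R] V') (hfg : f ∘ₗ g = LinearMap.id - (d' ∘ₗ h' + h' ∘ₗ d')) :
    Nonempty (Homology d' ≃ₗ[R] Homology d) :=
  ⟨.ofLinearMap (homologyMap g hg) (homologyMap f hf)
    (by rw [homologyMap_comp]; exact homologyMap_eq_id_of_homotopy _ _ h hgf)
    (by rw [homologyMap_comp]; exact homologyMap_eq_id_of_homotopy _ _ h' hfg)⟩

theorem retract_differential_comp_self (hd : d ∘ₗ d = 0) (f : V →ₗ[R] V') (g : V' →ₗ[R] V)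
    (hgf : (g ∘ₗ f) ∘ₗ d = d ∘ₗ (g ∘ₗ f)) :
    (f ∘ₗ d ∘ₗ g) ∘ₗ (f ∘ₗ d ∘ₗ g) = 0 := by
  ext v
  have hgf' := LinearMap.congr_fun hgf
  have hd' := LinearMap.congr_fun hd
  simp only [comp_apply, LinearMap.zero_apply] at hgf' hd' ⊢
  rw [hgf', hd', map_zero]

theorem comp_differential_eq_retract_differential_comp (f : V →ₗ[R] V') (g : V' →ₗ[R] V)
    (hfg : f ∘ₗ g = LinearMap.id) (hgf : (g ∘ₗ f) ∘ₗ d = d ∘ₗ (g ∘ₗ f)) :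
    f ∘ₗ d = (f ∘ₗ d ∘ₗ g) ∘ₗ f := by
  rw [comp_assoc, comp_assoc, ← hgf, ← comp_assoc, ← comp_assoc, hfg, id_comp]

theorem section_comp_retract_differential (f : V →ₗ[R] V') (g : V' →ₗ[R] V)
    (hfg : f ∘ₗ g = LinearMap.id) (hgf : (g ∘ₗ f) ∘ₗ d = d ∘ₗ (g ∘ₗ f)) :
    g ∘ₗ (f ∘ₗ d ∘ₗ g) = d ∘ₗ g := by
  rw [← comp_assoc, ← comp_assoc, hgf, comp_assoc, comp_assoc, hfg, comp_id]

variable (d) in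
def deformation (h : V →ₗ[R] V) : V →ₗ[R] V :=
  LinearMap.id - (d ∘ₗ h + h ∘ₗ d)

theorem deformation_comp_comm (hd : d ∘ₗ d = 0) (h : V →ₗ[R] V) :
    deformation d h ∘ₗ d = d ∘ₗ deformation d h := by
  simp only [deformation, ← Module.End.mul_eq_comp, ← Module.End.one_eq_id] at hd ⊢
  calc (1 - (d * h + h * d)) * d = d - d * h * d - h * (d * d) := by noncomm_ring
    _ = d - d * h * d - d * d * h := by rw [hd, mul_zero, zero_mul]
    _ = d * (1 - (d * h + h * d)) := by noncomm_ring

theorem deformation_comp_self (hd : d ∘ₗ d = 0) {h : V →ₗ[R] V} (hh : h ∘ₗ h = 0)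
    (hhdh : h ∘ₗ d ∘ₗ h = h) : deformation d h ∘ₗ deformation d h = deformation d h := by
  simp only [deformation, ← Module.End.mul_eq_comp, ← Module.End.one_eq_id] at hd hh hhdh ⊢
  calc (1 - (d * h + h * d)) * (1 - (d * h + h * d))
      = 1 - 2 * (d * h + h * d) + (d * (h * (d * h)) + d * (h * h) * d + h * (d * d) * h
          + h * (d * h) * d) := by noncomm_ring
    _ = 1 - (d * h + h * d) := by rw [hd, hh, hhdh]; noncomm_ring

theorem deformation_add_id_of_zmod_two {M : Type*} [AddCommGroup M] [Module (ZMod 2) M]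
    (d h : M →ₗ[ZMod 2] M) : deformation d h + LinearMap.id = d ∘ₗ h + h ∘ₗ d :=
  calc deformation d h + LinearMap.id
        = -(d ∘ₗ h + h ∘ₗ d) - (-LinearMap.id - LinearMap.id) := by rw [deformation]; abel
    _ = d ∘ₗ h + h ∘ₗ d := by
        rw [neg_eq_self_of_zmod_two (d ∘ₗ h + h ∘ₗ d), neg_eq_self_of_zmod_two LinearMap.id,
          sub_self, sub_zero]

end DifferentialModule

open DifferentialModule

namespace GaussianElimination

noncomputable section

variable {R ι V V' : Type*} [CommRing R] [AddCommGroup V] [Module R V]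
  [AddCommGroup V'] [Module R V'] (x : Module.Basis ι R V) {k l : ι}

variable (k l) in
def homotopy : V →ₗ[R] V := (x.coord l).smulRight (x k)

@[simp]
theorem homotopy_apply (v : V) : homotopy x k l v = x.repr v l • x k := rfl

theorem homotopy_comp_self (hkl : k ≠ l) : homotopy x k l ∘ₗ homotopy x k l = 0 := by
  ext v
  simp [hkl]

theorem homotopy_comp_comp_self (d : V →ₗ[R] V) (hdkl : x.repr (d (x k)) l = 1) :
    homotopy x k l ∘ₗ d ∘ₗ homotopy x k l = homotopy x k l := by
  ext v
  simp [hdkl]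

variable {d : V →ₗ[R] V}

theorem deformation_basis_left (hkl : k ≠ l) (hdkl : x.repr (d (x k)) l = 1) :
    deformation d (homotopy x k l) (x k) = 0 := by
  simp [deformation, hkl, hdkl]

theorem repr_deformation_right (hkl : k ≠ l) (hdkl : x.repr (d (x k)) l = 1) (v : V) :
    x.repr (deformation d (homotopy x k l) v) l = 0 := by
  simp [deformation, hkl, hdkl]

theorem deformation_homotopy_comp_self (hd : d ∘ₗ d = 0) (hkl : k ≠ l)
    (hdkl : x.repr (d (x k)) l = 1) :
    deformation d (homotopy x k l) ∘ₗ deformation d (homotopy x k l) =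
      deformation d (homotopy x k l) :=
  deformation_comp_self hd (homotopy_comp_self x hkl) (homotopy_comp_comp_self x d hdkl)

variable (x' : Module.Basis {i : ι // i ≠ k ∧ i ≠ l} R V')

def inclusion : V' →ₗ[R] V := x'.constr R fun j => x j

@[simp]
theorem inclusion_basis (j : {i : ι // i ≠ k ∧ i ≠ l}) : inclusion x x' (x' j) = x j :=
  x'.constr_basis _ _ _

theorem deformation_inclusion_basis (j : {i : ι // i ≠ k ∧ i ≠ l}) :
    deformation d (homotopy x k l) (inclusion x x' (x' j)) = x j - x.repr (d (x j)) l • x k := by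
  simp [deformation, j.2.2]

variable [DecidableEq ι]

def projection : V →ₗ[R] V' :=
  x.constr R fun i => if hi : i ≠ k ∧ i ≠ l then x' ⟨i, hi⟩ else 0

@[simp]
theorem projection_basis (j : {i : ι // i ≠ k ∧ i ≠ l}) : projection x x' (x j) = x' j := by
  simp [projection, j.2]

@[simp]
theorem projection_basis_left : projection x x' (x k) = 0 := by
  simp [projection]

@[simp]
theorem projection_basis_right : projection x x' (x l) = 0 := by
  simp [projection]

theorem repr_projection (v : V) (j : {i : ι // i ≠ k ∧ i ≠ l}) :
    x'.repr (projection x x' v) j = x.repr v j := by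
  suffices x'.coord j ∘ₗ projection x x' = x.coord j from LinearMap.congr_fun this v
  refine x.ext fun i => ?_
  by_cases hi : i ≠ k ∧ i ≠ l
  · simp [projection, hi, Finsupp.single_apply, Subtype.ext_iff]
  · have hj : i ≠ j := fun h => hi (h ▸ j.2)
    simp [projection, hi, hj]

theorem inclusion_comp_projection (hkl : k ≠ l) :
    inclusion x x' ∘ₗ projection x x' =
      LinearMap.id - ((x.coord k).smulRight (x k) + (x.coord l).smulRight (x l)) := by
  refine x.ext fun i => ?_
  by_cases hik : i = k
  · subst hik; simp [hkl.symm]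
  by_cases hil : i = l
  · subst hil; simp [hkl]
  · have := projection_basis x x' ⟨i, hik, hil⟩
    simp [Ne.symm hik, Ne.symm hil, this]

theorem projection_comp_deformation_comp_inclusion :
    projection x x' ∘ₗ deformation d (homotopy x k l) ∘ₗ inclusion x x' = LinearMap.id :=
  x'.ext fun j => by rw [comp_apply, comp_apply, deformation_inclusion_basis]; simp

theorem deformation_comp_inclusion_comp_projection_comp (hd : d ∘ₗ d = 0) (hkl : k ≠ l)
    (hdkl : x.repr (d (x k)) l = 1) :
    deformation d (homotopy x k l) ∘ₗ inclusion x x' ∘ₗ projection x x' ∘ₗ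
        deformation d (homotopy x k l) = deformation d (homotopy x k l) := by
  set p := deformation d (homotopy x k l)
  have hp : p ∘ₗ p = p := deformation_homotopy_comp_self x hd hkl hdkl
  ext v
  have hip := LinearMap.congr_fun (inclusion_comp_projection x x' hkl) (p v)
  simp only [comp_apply, LinearMap.sub_apply, LinearMap.add_apply, id_apply,
    smulRight_apply] at hip ⊢
  rw [hip, map_sub, map_add, map_smul, map_smul, deformation_basis_left x hkl hdkl,
    Module.Basis.coord_apply x l, repr_deformation_right x hkl hdkl, ← comp_apply p p, hp]
  simp

theorem retract_differential_apply_basis [Fintype ι] (hd : d ∘ₗ d = 0) (hkl : k ≠ l)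
    (hdkl : x.repr (d (x k)) l = 1) (i : {i : ι // i ≠ k ∧ i ≠ l}) :
    ((projection x x' ∘ₗ deformation d (homotopy x k l)) ∘ₗ d ∘ₗ
        (deformation d (homotopy x k l) ∘ₗ inclusion x x')) (x' i) =
      ∑ j : {i : ι // i ≠ k ∧ i ≠ l},
        (x.repr (d (x i)) j - x.repr (d (x i)) l * x.repr (d (x k)) j) • x' j := by
  have hp := deformation_homotopy_comp_self x hd hkl hdkl
  have hpdp : deformation d (homotopy x k l) ∘ₗ d ∘ₗ deformation d (homotopy x k l) =
      d ∘ₗ deformation d (homotopy x k l) := by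
    rw [← comp_assoc, deformation_comp_comm hd, comp_assoc, hp]
  have := LinearMap.congr_fun hpdp (inclusion x x' (x' i))
  simp only [comp_apply] at this ⊢
  rw [this, deformation_inclusion_basis]
  apply x'.repr.injective
  ext j
  rw [Module.Basis.repr_sum_self]
  simp [repr_projection]

end

end GaussianElimination

open DifferentialModule GaussianElimination

/-- Cancellation lemma (Gaussian elimination): let `V` be the free `𝔽₂`-vector space
with distinguished basis `(x i)_{i ∈ ι}` (`ι` finite) and `d` a differential on `V`.
Writing `d(x_i, x_j)` for the coefficient of `x j` in `d (x i)`, suppose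
`d(x_k, x_l) = 1` for some `k ≠ l`.  Let `V'` be the free `𝔽₂`-vector space on
`ι' = {i // i ≠ k ∧ i ≠ l}` with basis `x'`, and let `d'` be the linear map with
`d' (x' i) = Σ_{j ∈ ι'} (d(x_i, x_j) + d(x_i, x_l)·d(x_k, x_j)) • x' j`.
Then `d' ∘ d' = 0` and `(V', d')` is chain homotopy equivalent to `(V, d)`:
there are `f : V → V'`, `g : V' → V`, `h : V → V` with `f ∘ d = d' ∘ f`,
`g ∘ d' = d ∘ g`, `f ∘ g = id` and `g ∘ f + id = d ∘ h + h ∘ d`.  In particular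
the homology `ker d' / im d'` is isomorphic to `ker d / im d`. -/
theorem cancellation_lemma
    {ι : Type*} [Fintype ι] [DecidableEq ι]
    {V V' : Type*} [AddCommGroup V] [Module (ZMod 2) V]
    [AddCommGroup V'] [Module (ZMod 2) V']
    (x : Module.Basis ι (ZMod 2) V)
    (d : V →ₗ[ZMod 2] V) (hd : d ∘ₗ d = 0)
    (k l : ι) (hkl : k ≠ l)
    (hdkl : x.repr (d (x k)) l = 1)
    (x' : Module.Basis {i : ι // i ≠ k ∧ i ≠ l} (ZMod 2) V')
    (d' : V' →ₗ[ZMod 2] V')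
    (hd' : ∀ i : {i : ι // i ≠ k ∧ i ≠ l},
      d' (x' i) =
        ∑ j : {i : ι // i ≠ k ∧ i ≠ l},
          (x.repr (d (x (i : ι))) (j : ι)
            + x.repr (d (x (i : ι))) l * x.repr (d (x k)) (j : ι)) • x' j) :
    d' ∘ₗ d' = 0 ∧
    (∃ (f : V →ₗ[ZMod 2] V') (g : V' →ₗ[ZMod 2] V) (h : V →ₗ[ZMod 2] V),
      f ∘ₗ d = d' ∘ₗ f ∧
      g ∘ₗ d' = d ∘ₗ g ∧
      f ∘ₗ g = LinearMap.id ∧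
      g ∘ₗ f + LinearMap.id = d ∘ₗ h + h ∘ₗ d) ∧
    Nonempty
      ((LinearMap.ker d' ⧸ (LinearMap.range d').comap (LinearMap.ker d').subtype)
        ≃ₗ[ZMod 2]
       (LinearMap.ker d ⧸ (LinearMap.range d).comap (LinearMap.ker d).subtype)) := by
  set h := homotopy x k l
  set p := deformation d h
  set f := projection x x' ∘ₗ p
  set g := p ∘ₗ inclusion x x'
  have hp : p ∘ₗ p = p := deformation_homotopy_comp_self x hd hkl hdkl
  have hfg : f ∘ₗ g = LinearMap.id := by
    change projection x x' ∘ₗ p ∘ₗ p ∘ₗ inclusion x x' = _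
    rw [← comp_assoc (inclusion x x'), hp]
    exact projection_comp_deformation_comp_inclusion x x'
  have hgf : g ∘ₗ f = p := by
    rw [comp_assoc]
    exact deformation_comp_inclusion_comp_projection_comp x x' hd hkl hdkl
  have hgfd : (g ∘ₗ f) ∘ₗ d = d ∘ₗ (g ∘ₗ f) := hgf ▸ deformation_comp_comm hd h
  obtain rfl : d' = f ∘ₗ d ∘ₗ g := x'.ext fun i => by
    rw [hd' i, retract_differential_apply_basis x x' hd hkl hdkl i]
    simp only [CharTwo.sub_eq_add]
  have hf := comp_differential_eq_retract_differential_comp f g hfg hgfd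
  have hg := section_comp_retract_differential f g hfg hgfd
  refine ⟨retract_differential_comp_self hd f g hgfd, ⟨f, g, h, hf, hg, hfg, ?_⟩,
    nonempty_homology_linearEquiv_of_homotopyEquiv f g hf hg h hgf 0 (by simp [hfg])⟩
  rw [hgf]
  exact deformation_add_id_of_zmod_two d h
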